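/- arXiv:2107.13432 — 2 statements merged into one kernel-verified Lean document; each statement's English description precedes it below -/
import Mathlib

section
/- Let φ(r) = -Aνr^α + B√r with A, B, ν > 0 and α > 2, R* its unique positive root, and let m solve m' = φ(m) on (δ, T) with m(δ) = m₀ > R*. Then m(t) > R* for all t ∈ (δ, T), m is non-increasing, and m(t) = Φ^{-1}(t - δ + Φ(m₀)), where Φ(r) = ∫_r^∞ (-1/φ(ρ)) dρ. -/
open Set MeasureTheory


lemma lem_Rstar_pos (A B ν α : ℝ) (hA : 0 < A) (hB : 0 < B) (hν : 0 < ν) (Rstar : ℝ)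
    (hRstar : Rstar = (B / (A * ν)) ^ (2 / (2 * α - 1))) : 0 < Rstar := by
  rw [hRstar]; exact Real.rpow_pos_of_pos (div_pos hB (mul_pos hA hν)) _

lemma lem_Rstar_rpow (A B ν α : ℝ) (hA : 0 < A) (hB : 0 < B) (hν : 0 < ν) (hα : 2 < α) (Rstar : ℝ)
    (hRstar : Rstar = (B / (A * ν)) ^ (2 / (2 * α - 1))) :
    Rstar ^ (α - 1/2) = B / (A * ν) := by
  have hc : (0:ℝ) < B / (A * ν) := div_pos hB (mul_pos hA hν)
  rw [hRstar, ← Real.rpow_mul hc.le]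
  have h1 : 2 / (2 * α - 1) * (α - 1 / 2) = 1 := by
    rw [div_mul_eq_mul_div, div_eq_one_iff_eq (by linarith : 2 * α - 1 ≠ 0)]
    ring
  rw [h1, Real.rpow_one]

-- factorization of φ
lemma lem_phi_eq (A B ν α : ℝ) (hA : 0 < A) (hB : 0 < B) (hν : 0 < ν) (hα : 2 < α)
    (φ : ℝ → ℝ) (hφ : ∀ r : ℝ, φ r = -A * ν * r ^ α + B * Real.sqrt r)
    (Rstar : ℝ) (hRstar : Rstar = (B / (A * ν)) ^ (2 / (2 * α - 1))) (r : ℝ) (hr : 0 < r) :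
    φ r = A * ν * Real.sqrt r * (Rstar ^ (α - 1/2) - r ^ (α - 1/2)) := by
  have hsq : Real.sqrt r = r ^ (1/2 : ℝ) := Real.sqrt_eq_rpow r
  have hRr := lem_Rstar_rpow A B ν α hA hB hν hα Rstar hRstar
  have h2 : r ^ (1/2:ℝ) * r ^ (α - 1/2) = r ^ α := by
    rw [← Real.rpow_add hr]; norm_num
  have hAν : A * ν ≠ 0 := (mul_pos hA hν).ne'
  have h3 : r ^ ((α*2-1)/2) = r ^ (α - 1/2) := by congr 1; ring
  rw [hφ, hsq, hRr]
  field_simp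
  rw [show r ^ ((2 * α - 1) / 2) = r ^ (α - 1/2) by congr 1; ring]
  linear_combination (A*ν) * h2

lemma lem_phi_neg (A B ν α : ℝ) (hA : 0 < A) (hB : 0 < B) (hν : 0 < ν) (hα : 2 < α)
    (φ : ℝ → ℝ) (hφ : ∀ r : ℝ, φ r = -A * ν * r ^ α + B * Real.sqrt r)
    (Rstar : ℝ) (hRstar : Rstar = (B / (A * ν)) ^ (2 / (2 * α - 1)))
    (r : ℝ) (hr : Rstar < r) : φ r < 0 := by
  have hR0 := lem_Rstar_pos A B ν α hA hB hν Rstar hRstar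
  have hr0 : 0 < r := hR0.trans hr
  rw [lem_phi_eq A B ν α hA hB hν hα φ hφ Rstar hRstar r hr0]
  have : Rstar ^ (α - 1/2) < r ^ (α - 1/2) :=
    Real.rpow_lt_rpow hR0.le hr (by linarith)
  have h1 : 0 < A * ν * Real.sqrt r := mul_pos (mul_pos hA hν) (Real.sqrt_pos.2 hr0)
  nlinarith

lemma lem_phi_zero (A B ν α : ℝ) (hA : 0 < A) (hB : 0 < B) (hν : 0 < ν) (hα : 2 < α)
    (φ : ℝ → ℝ) (hφ : ∀ r : ℝ, φ r = -A * ν * r ^ α + B * Real.sqrt r)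
    (Rstar : ℝ) (hRstar : Rstar = (B / (A * ν)) ^ (2 / (2 * α - 1))) : φ Rstar = 0 := by
  have hR0 := lem_Rstar_pos A B ν α hA hB hν Rstar hRstar
  rw [lem_phi_eq A B ν α hA hB hν hα φ hφ Rstar hRstar Rstar hR0]
  ring

lemma lem_phi_deriv (A B ν α : ℝ) (hα : 2 < α)
    (φ : ℝ → ℝ) (hφ : ∀ r : ℝ, φ r = -A * ν * r ^ α + B * Real.sqrt r)
    (r : ℝ) (hr : 0 < r) :
    HasDerivAt φ (-A * ν * (α * r ^ (α - 1)) + B * (1 / (2 * Real.sqrt r))) r := by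
  have h1 : HasDerivAt (fun x : ℝ => x ^ α) (α * r ^ (α - 1)) r :=
    Real.hasDerivAt_rpow_const (Or.inl hr.ne')
  have h2 : HasDerivAt Real.sqrt (1 / (2 * Real.sqrt r)) r := Real.hasDerivAt_sqrt hr.ne'
  have := (h1.const_mul (-A * ν)).add (h2.const_mul B)
  have heq : φ = fun x => -A * ν * x ^ α + B * Real.sqrt x := funext hφ
  rw [heq]; exact this

lemma lem_phi_contAt (A B ν α : ℝ) (hα : 2 < α)
    (φ : ℝ → ℝ) (hφ : ∀ r : ℝ, φ r = -A * ν * r ^ α + B * Real.sqrt r)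
    (r : ℝ) (hr : 0 < r) : ContinuousAt φ r :=
  (lem_phi_deriv A B ν α hα φ hφ r hr).continuousAt

lemma lem_phi_lipschitz (A B ν α : ℝ) (hA : 0 < A) (hB : 0 < B) (hν : 0 < ν) (hα : 2 < α)
    (φ : ℝ → ℝ) (hφ : ∀ r : ℝ, φ r = -A * ν * r ^ α + B * Real.sqrt r)
    (c M : ℝ) (hc : 0 < c) :
    LipschitzOnWith (Real.toNNReal (A * ν * (α * M ^ (α - 1)) + B * (1 / (2 * Real.sqrt c))))
      φ (Icc c M) := by
  rcases le_or_gt c M with hcM | hcM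
  · apply (convex_Icc c M).lipschitzOnWith_of_nnnorm_hasDerivWithin_le
      (f' := fun r => -A * ν * (α * r ^ (α - 1)) + B * (1 / (2 * Real.sqrt r)))
    · intro x hx
      exact (lem_phi_deriv A B ν α hα φ hφ x (hc.trans_le hx.1)).hasDerivWithinAt
    · intro x hx
      rw [← NNReal.coe_le_coe, coe_nnnorm, Real.norm_eq_abs,
        Real.coe_toNNReal _ (by
          have hM : 0 < M := hc.trans_le hcM
          have hM2 : 0 < M ^ (α-1) := Real.rpow_pos_of_pos hM _
          positivity)]
      have hx0 : 0 < x := hc.trans_le hx.1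
      have hb1 : x ^ (α - 1) ≤ M ^ (α - 1) :=
        Real.rpow_le_rpow hx0.le hx.2 (by linarith)
      have hb2 : B * (1 / (2 * Real.sqrt x)) ≤ B * (1 / (2 * Real.sqrt c)) := by
        have := Real.sqrt_le_sqrt hx.1
        have hsc : 0 < Real.sqrt c := Real.sqrt_pos.2 hc
        gcongr
      have hxp : 0 < x ^ (α - 1) := Real.rpow_pos_of_pos hx0 _
      have hb1' : A * ν * (α * x ^ (α - 1)) ≤ A * ν * (α * M ^ (α - 1)) := by
        gcongr
      have h3 : 0 ≤ A * ν * (α * x ^ (α - 1)) := by positivity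
      have h4 : 0 ≤ B * (1 / (2 * Real.sqrt x)) := by positivity
      rw [abs_le]
      constructor <;> linarith
  · rw [Icc_eq_empty (not_le.2 hcM)]
    exact lipschitzOnWith_empty _ _

lemma lem_phi_lower (A B ν α : ℝ) (hA : 0 < A) (hB : 0 < B) (hν : 0 < ν) (hα : 2 < α)
    (φ : ℝ → ℝ) (hφ : ∀ r : ℝ, φ r = -A * ν * r ^ α + B * Real.sqrt r)
    (Rstar : ℝ) (hRstar : Rstar = (B / (A * ν)) ^ (2 / (2 * α - 1)))
    (r : ℝ) (hr : Rstar < r) (ρ : ℝ) (hρ : r ≤ ρ) :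
    (1 - (Rstar / r) ^ (α - 1/2)) * (A * ν) * ρ ^ α ≤ -φ ρ := by
  have hR0 := lem_Rstar_pos A B ν α hA hB hν Rstar hRstar
  have hr0 : 0 < r := hR0.trans hr
  have hρ0 : 0 < ρ := hr0.trans_le hρ
  rw [lem_phi_eq A B ν α hA hB hν hα φ hφ Rstar hRstar ρ hρ0]
  have hκ : (Rstar / r) ^ (α - 1/2 : ℝ) = Rstar ^ (α - 1/2 : ℝ) / r ^ (α - 1/2 : ℝ) :=
    Real.div_rpow hR0.le hr0.le _
  have h1 : Rstar ^ (α - 1/2 : ℝ) ≤ (Rstar / r) ^ (α - 1/2 : ℝ) * ρ ^ (α - 1/2 : ℝ) := by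
    rw [hκ, div_mul_eq_mul_div, le_div_iff₀ (Real.rpow_pos_of_pos hr0 _)]
    have : r ^ (α - 1/2 : ℝ) ≤ ρ ^ (α - 1/2 : ℝ) := Real.rpow_le_rpow hr0.le hρ (by linarith)
    nlinarith [Real.rpow_pos_of_pos hR0 (α - 1/2 : ℝ)]
  have h2 : Real.sqrt ρ * ρ ^ (α - 1/2 : ℝ) = ρ ^ α := by
    rw [Real.sqrt_eq_rpow, ← Real.rpow_add hρ0]; norm_num
  have hsρ : 0 < Real.sqrt ρ := Real.sqrt_pos.2 hρ0
  have key : (1 - (Rstar / r) ^ (α - 1/2 : ℝ)) * ρ ^ (α - 1/2 : ℝ)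
      ≤ ρ ^ (α - 1/2 : ℝ) - Rstar ^ (α - 1/2 : ℝ) := by nlinarith
  calc (1 - (Rstar / r) ^ (α - 1/2 : ℝ)) * (A * ν) * ρ ^ α
      = A * ν * Real.sqrt ρ * ((1 - (Rstar / r) ^ (α - 1/2 : ℝ)) * ρ ^ (α - 1/2 : ℝ)) := by
        rw [← h2]; ring
    _ ≤ A * ν * Real.sqrt ρ * (ρ ^ (α - 1/2 : ℝ) - Rstar ^ (α - 1/2 : ℝ)) := by
        have : 0 < A * ν * Real.sqrt ρ := by positivity
        exact mul_le_mul_of_nonneg_left key this.le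
    _ = -(A * ν * Real.sqrt ρ * (Rstar ^ (α - 1/2 : ℝ) - ρ ^ (α - 1/2 : ℝ))) := by ring

lemma lem_kappa_lt (A B ν α : ℝ) (hA : 0 < A) (hB : 0 < B) (hν : 0 < ν) (hα : 2 < α)
    (Rstar : ℝ) (hRstar : Rstar = (B / (A * ν)) ^ (2 / (2 * α - 1)))
    (r : ℝ) (hr : Rstar < r) : (Rstar / r) ^ (α - 1/2 : ℝ) < 1 := by
  have hR0 := lem_Rstar_pos A B ν α hA hB hν Rstar hRstar
  have hr0 : 0 < r := hR0.trans hr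
  have : Rstar / r < 1 := (div_lt_one hr0).2 hr
  exact Real.rpow_lt_one (by positivity) this (by linarith)

lemma lem_cont_integrand (A B ν α : ℝ) (hA : 0 < A) (hB : 0 < B) (hν : 0 < ν) (hα : 2 < α)
    (φ : ℝ → ℝ) (hφ : ∀ r : ℝ, φ r = -A * ν * r ^ α + B * Real.sqrt r)
    (Rstar : ℝ) (hRstar : Rstar = (B / (A * ν)) ^ (2 / (2 * α - 1)))
    (x : ℝ) (hx : Rstar < x) : ContinuousAt (fun ρ => -1 / φ ρ) x := by
  have hR0 := lem_Rstar_pos A B ν α hA hB hν Rstar hRstar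
  exact continuousAt_const.div (lem_phi_contAt A B ν α hα φ hφ x (hR0.trans hx))
    (lem_phi_neg A B ν α hA hB hν hα φ hφ Rstar hRstar x hx).ne

lemma lem_integrable (A B ν α : ℝ) (hA : 0 < A) (hB : 0 < B) (hν : 0 < ν) (hα : 2 < α)
    (φ : ℝ → ℝ) (hφ : ∀ r : ℝ, φ r = -A * ν * r ^ α + B * Real.sqrt r)
    (Rstar : ℝ) (hRstar : Rstar = (B / (A * ν)) ^ (2 / (2 * α - 1)))
    (r : ℝ) (hr : Rstar < r) :
    IntegrableOn (fun ρ => -1 / φ ρ) (Ioi r) := by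
  have hR0 := lem_Rstar_pos A B ν α hA hB hν Rstar hRstar
  have hr0 : 0 < r := hR0.trans hr
  set c : ℝ := (1 - (Rstar / r) ^ (α - 1/2)) * (A * ν) with hc
  have hc0 : 0 < c := by
    have := lem_kappa_lt A B ν α hA hB hν hα Rstar hRstar r hr
    have : 0 < 1 - (Rstar / r) ^ (α - 1/2 : ℝ) := by linarith
    positivity
  have hg : IntegrableOn (fun ρ : ℝ => c⁻¹ * ρ ^ (-α)) (Ioi r) :=
    (integrableOn_Ioi_rpow_of_lt (by linarith) hr0).const_mul _
  apply Integrable.mono' hg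
  · refine ContinuousOn.aestronglyMeasurable ?_ measurableSet_Ioi
    intro x hx
    exact (lem_cont_integrand A B ν α hA hB hν hα φ hφ Rstar hRstar x
      (hr.trans hx)).continuousWithinAt
  · rw [ae_restrict_iff' measurableSet_Ioi]
    refine ae_of_all _ fun ρ hρ => ?_
    have hρr : r ≤ ρ := (le_of_lt hρ)
    have hρ0 : 0 < ρ := hr0.trans_le hρr
    have hlow := lem_phi_lower A B ν α hA hB hν hα φ hφ Rstar hRstar r hr ρ hρr
    have hρα : 0 < ρ ^ (α : ℝ) := Real.rpow_pos_of_pos hρ0 _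
    have hφρ : 0 < -φ ρ := lt_of_lt_of_le (by positivity) hlow
    rw [Real.norm_eq_abs]
    have h1 : |(-1) / φ ρ| = 1 / (-φ ρ) := by
      rw [abs_div, abs_neg, abs_one, abs_of_neg (by linarith : φ ρ < 0)]
    calc |(-1) / φ ρ| = 1 / (-φ ρ) := h1
      _ ≤ 1 / (c * ρ ^ α) := one_div_le_one_div_of_le (by positivity) hlow
      _ = c⁻¹ * ρ ^ (-α) := by rw [Real.rpow_neg hρ0.le, one_div, mul_inv]

lemma lem_split (A B ν α : ℝ) (hA : 0 < A) (hB : 0 < B) (hν : 0 < ν) (hα : 2 < α)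
    (φ : ℝ → ℝ) (hφ : ∀ r : ℝ, φ r = -A * ν * r ^ α + B * Real.sqrt r)
    (Rstar : ℝ) (hRstar : Rstar = (B / (A * ν)) ^ (2 / (2 * α - 1)))
    (Φ : ℝ → ℝ) (hΦ : ∀ r : ℝ, Φ r = ∫ ρ in Ioi r, -1 / φ ρ)
    (r₀ x : ℝ) (hr₀ : Rstar < r₀) (hx : r₀ ≤ x) :
    Φ x = Φ r₀ - ∫ t in r₀..x, -1 / φ t := by
  have hint := lem_integrable A B ν α hA hB hν hα φ hφ Rstar hRstar r₀ hr₀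
  have h1 : Ioc r₀ x ∪ Ioi x = Ioi r₀ := Ioc_union_Ioi_eq_Ioi hx
  have h2 : (∫ ρ in Ioi r₀, -1 / φ ρ)
      = (∫ ρ in Ioc r₀ x, -1 / φ ρ) + ∫ ρ in Ioi x, -1 / φ ρ := by
    rw [← h1] at hint ⊢
    rw [setIntegral_union (Ioc_disjoint_Ioi le_rfl) measurableSet_Ioi
      (hint.mono_set subset_union_left) (hint.mono_set subset_union_right)]
  rw [hΦ x, hΦ r₀, h2, intervalIntegral.integral_of_le hx]
  ring

lemma lem_Phi_deriv (A B ν α : ℝ) (hA : 0 < A) (hB : 0 < B) (hν : 0 < ν) (hα : 2 < α)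
    (φ : ℝ → ℝ) (hφ : ∀ r : ℝ, φ r = -A * ν * r ^ α + B * Real.sqrt r)
    (Rstar : ℝ) (hRstar : Rstar = (B / (A * ν)) ^ (2 / (2 * α - 1)))
    (Φ : ℝ → ℝ) (hΦ : ∀ r : ℝ, Φ r = ∫ ρ in Ioi r, -1 / φ ρ)
    (r : ℝ) (hr : Rstar < r) : HasDerivAt Φ (1 / φ r) r := by
  set r₀ : ℝ := (Rstar + r) / 2 with hr₀def
  have hr₀ : Rstar < r₀ := by rw [hr₀def]; linarith
  have hr₀r : r₀ < r := by rw [hr₀def]; linarith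
  have hint := lem_integrable A B ν α hA hB hν hα φ hφ Rstar hRstar r₀ hr₀
  have hii : IntervalIntegrable (fun ρ => -1 / φ ρ) volume r₀ r := by
    rw [intervalIntegrable_iff_integrableOn_Ioc_of_le hr₀r.le]
    exact hint.mono_set (Ioc_subset_Ioi_self)
  have hmeas : StronglyMeasurableAtFilter (fun ρ => -1 / φ ρ) (nhds r) := by
    refine ContinuousAt.stronglyMeasurableAtFilter isOpen_Ioi ?_ r hr
    intro x hx
    exact lem_cont_integrand A B ν α hA hB hν hα φ hφ Rstar hRstar x hx
  have hca : ContinuousAt (fun ρ => -1 / φ ρ) r :=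
    lem_cont_integrand A B ν α hA hB hν hα φ hφ Rstar hRstar r hr
  have hFTC : HasDerivAt (fun x => ∫ t in r₀..x, -1 / φ t) (-1 / φ r) r :=
    intervalIntegral.integral_hasDerivAt_right hii hmeas hca
  have hD : HasDerivAt (fun x => Φ r₀ - ∫ t in r₀..x, -1 / φ t) (1 / φ r) r := by
    have := (hFTC.const_sub (Φ r₀))
    rw [show (1 / φ r) = -(-1 / φ r) by ring]
    exact this
  refine hD.congr_of_eventuallyEq ?_
  have hmem : Ioi r₀ ∈ nhds r := isOpen_Ioi.mem_nhds hr₀r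
  filter_upwards [hmem] with x hx
  exact lem_split A B ν α hA hB hν hα φ hφ Rstar hRstar Φ hΦ r₀ x hr₀ (le_of_lt hx)

lemma lem_Phi_anti (A B ν α : ℝ) (hA : 0 < A) (hB : 0 < B) (hν : 0 < ν) (hα : 2 < α)
    (φ : ℝ → ℝ) (hφ : ∀ r : ℝ, φ r = -A * ν * r ^ α + B * Real.sqrt r)
    (Rstar : ℝ) (hRstar : Rstar = (B / (A * ν)) ^ (2 / (2 * α - 1)))
    (Φ : ℝ → ℝ) (hΦ : ∀ r : ℝ, Φ r = ∫ ρ in Ioi r, -1 / φ ρ) :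
    StrictAntiOn Φ (Ioi Rstar) := by
  apply strictAntiOn_of_deriv_neg (convex_Ioi Rstar)
  · intro x hx
    exact (lem_Phi_deriv A B ν α hA hB hν hα φ hφ Rstar hRstar Φ hΦ x hx).continuousAt.continuousWithinAt
  · intro x hx
    rw [interior_Ioi] at hx
    rw [(lem_Phi_deriv A B ν α hA hB hν hα φ hφ Rstar hRstar Φ hΦ x hx).deriv]
    have := lem_phi_neg A B ν α hA hB hν hα φ hφ Rstar hRstar x hx
    exact div_neg_of_pos_of_neg one_pos this

/-- If `m` solves `m' = φ(m)` on `[δ, T)` with `m(δ) = m₀ > R*`, then `m > R*`,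
`m` is non-increasing, and `m(t) = Φ⁻¹(t - δ + Φ(m₀))`, where
`Φ(r) = ∫_r^∞ (-1/φ(ρ)) dρ` and `Φ⁻¹` is the inverse of `Φ` on `(R*, ∞)`. -/
theorem solution_representation_above_Rstar
    (A B ν α : ℝ) (hA : 0 < A) (hB : 0 < B) (hν : 0 < ν) (hα : 2 < α)
    (φ : ℝ → ℝ) (hφ : ∀ r : ℝ, φ r = -A * ν * r ^ α + B * Real.sqrt r)
    (Rstar : ℝ) (hRstar : Rstar = (B / (A * ν)) ^ (2 / (2 * α - 1)))
    (Φ : ℝ → ℝ) (hΦ : ∀ r : ℝ, Φ r = ∫ ρ in Ioi r, -1 / φ ρ)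
    (δ T m₀ : ℝ) (hδT : δ < T) (hm₀ : Rstar < m₀)
    (m : ℝ → ℝ)
    (hm : ∀ t ∈ Ico δ T, HasDerivAt m (φ (m t)) t)
    (hinit : m δ = m₀) :
    (∀ t ∈ Ioo δ T, Rstar < m t) ∧
    AntitoneOn m (Ico δ T) ∧
    ∀ t ∈ Ioo δ T, m t = Function.invFunOn Φ (Ioi Rstar) (t - δ + Φ m₀) := by
  have hR0 := lem_Rstar_pos A B ν α hA hB hν Rstar hRstar
  have hmcont : ContinuousOn m (Ico δ T) := fun t ht => (hm t ht).continuousAt.continuousWithinAt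
  -- Part 1 (on Ico)
  have hP : ∀ t ∈ Ico δ T, Rstar < m t := by
    by_contra hcon
    push_neg at hcon
    obtain ⟨t₁, ht₁, ht₁le⟩ := hcon
    have ht₁δ : δ < t₁ := by
      rcases eq_or_lt_of_le ht₁.1 with h | h
      · exfalso; rw [← h, hinit] at ht₁le; linarith
      · exact h
    set S : Set ℝ := {t ∈ Icc δ t₁ | m t ≤ Rstar} with hS
    have hsub : Icc δ t₁ ⊆ Ico δ T := fun t ht => ⟨ht.1, lt_of_le_of_lt ht.2 ht₁.2⟩
    have hmc1 : ContinuousOn m (Icc δ t₁) := hmcont.mono hsub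
    have hScl : IsClosed S := by
      have heq : S = Icc δ t₁ ∩ m ⁻¹' (Iic Rstar) := rfl
      rw [heq]
      exact hmc1.preimage_isClosed_of_isClosed isClosed_Icc isClosed_Iic
    have hSne : S.Nonempty := ⟨t₁, ⟨ht₁.1, le_rfl⟩, ht₁le⟩
    have hSbdd : BddBelow S := ⟨δ, fun t ht => ht.1.1⟩
    set t₀ := sInf S with ht₀def
    have ht₀S : t₀ ∈ S := hScl.csInf_mem hSne hSbdd
    have ht₀mem : t₀ ∈ Icc δ t₁ := ht₀S.1
    have ht₀δ : δ < t₀ := by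
      rcases eq_or_lt_of_le ht₀mem.1 with h | h
      · exfalso; have := ht₀S.2; rw [← h, hinit] at this; linarith
      · exact h
    have hlt : ∀ t ∈ Ico δ t₀, Rstar < m t := by
      intro t ht
      by_contra hle
      push_neg at hle
      have : t ∈ S := ⟨⟨ht.1, le_trans ht.2.le ht₀mem.2⟩, hle⟩
      exact absurd (csInf_le hSbdd this) (not_le.2 ht.2)
    have ht₀eq : m t₀ = Rstar := by
      refine le_antisymm ht₀S.2 ?_
      have hcw : ContinuousWithinAt m (Ico δ t₀) t₀ :=
        (hmc1.mono (Icc_subset_Icc_right ht₀mem.2)).continuousWithinAt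
          (⟨ht₀mem.1, le_rfl⟩ : t₀ ∈ Icc δ t₀) |>.mono Ico_subset_Icc_self
      have hne : (nhdsWithin t₀ (Ico δ t₀)).NeBot := by
        rw [← mem_closure_iff_nhdsWithin_neBot, closure_Ico (ne_of_lt ht₀δ)]
        exact ⟨le_of_lt ht₀δ, le_rfl⟩
      exact ge_of_tendsto hcw (eventually_nhdsWithin_of_forall fun t ht => (hlt t ht).le)
    -- bound above
    have hcomp : IsCompact (Icc δ t₀) := isCompact_Icc
    have hsub0 : Icc δ t₀ ⊆ Ico δ T := fun t ht =>
      ⟨ht.1, lt_of_le_of_lt (le_trans ht.2 ht₀mem.2) ht₁.2⟩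
    have hmc0 : ContinuousOn m (Icc δ t₀) := hmcont.mono hsub0
    obtain ⟨tM, htM, htMmax⟩ := hcomp.exists_isMaxOn (nonempty_Icc.2 (le_of_lt ht₀δ)) hmc0
    set M := m tM with hM
    have hrange : ∀ t ∈ Icc δ t₀, m t ∈ Icc Rstar M := by
      intro t ht
      refine ⟨?_, htMmax ht⟩
      rcases eq_or_lt_of_le ht.2 with h | h
      · rw [h, ht₀eq]
      · exact (hlt t ⟨ht.1, h⟩).le
    -- uniqueness
    set K := Real.toNNReal (A * ν * (α * M ^ (α - 1)) + B * (1 / (2 * Real.sqrt Rstar)))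
    have hlip : ∀ t : ℝ, LipschitzOnWith K (fun x => φ x) (Icc Rstar M) := fun _ =>
      lem_phi_lipschitz A B ν α hA hB hν hα φ hφ Rstar M hR0
    have huniq := ODE_solution_unique_of_mem_Icc_left (v := fun _ x => φ x)
      (s := fun _ => Icc Rstar M) (K := K) (fun t _ => hlip t)
      hmc0
      (fun t ht => (hm t (hsub0 (Ioc_subset_Icc_self ht))).hasDerivWithinAt)
      (fun t ht => hrange t (Ioc_subset_Icc_self ht))
      (continuousOn_const : ContinuousOn (fun _ => Rstar) (Icc δ t₀))
      (fun t _ => by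
        simpa [lem_phi_zero A B ν α hA hB hν hα φ hφ Rstar hRstar] using
          (hasDerivWithinAt_const t (Iic t) Rstar))
      (fun t _ => ⟨le_rfl, ht₀eq ▸ htMmax (⟨le_of_lt ht₀δ, le_rfl⟩ : t₀ ∈ Icc δ t₀)⟩)
      ht₀eq
    have := huniq ⟨le_rfl, le_of_lt ht₀δ⟩
    rw [hinit] at this
    simp at this
    linarith
  -- Part 2 : antitone
  have hanti : AntitoneOn m (Ico δ T) := by
    have hstrict : StrictAntiOn m (Ico δ T) := by
      apply strictAntiOn_of_deriv_neg (convex_Ico δ T) hmcont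
      intro x hx
      rw [interior_Ico] at hx
      have hx' : x ∈ Ico δ T := Ioo_subset_Ico_self hx
      rw [(hm x hx').deriv]
      exact lem_phi_neg A B ν α hA hB hν hα φ hφ Rstar hRstar _ (hP x hx')
    exact hstrict.antitoneOn
  refine ⟨fun t ht => hP t (Ioo_subset_Ico_self ht), hanti, ?_⟩
  -- Part 3 : representation
  have hinj : InjOn Φ (Ioi Rstar) :=
    (lem_Phi_anti A B ν α hA hB hν hα φ hφ Rstar hRstar Φ hΦ).injOn
  intro t ht
  have htI : t ∈ Ico δ T := Ioo_subset_Ico_self ht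
  -- derivative of Φ ∘ m is 1 on Ico δ T
  have hψ : ∀ s ∈ Ico δ T, HasDerivAt (fun u => Φ (m u) - u) 0 s := by
    intro s hs
    have hms := hP s hs
    have hΦd := lem_Phi_deriv A B ν α hA hB hν hα φ hφ Rstar hRstar Φ hΦ (m s) hms
    have hcomp := hΦd.comp s (hm s hs)
    have hne : φ (m s) ≠ 0 :=
      (lem_phi_neg A B ν α hA hB hν hα φ hφ Rstar hRstar _ hms).ne
    have h1 : 1 / φ (m s) * φ (m s) = 1 := by field_simp
    rw [h1] at hcomp
    have h2 := hcomp.sub (hasDerivAt_id s); rw [sub_self] at h2; exact h2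
  have hconst : Φ (m t) - t = Φ (m δ) - δ := by
    have hsub : Icc δ t ⊆ Ico δ T := fun s hs => ⟨hs.1, lt_of_le_of_lt hs.2 ht.2⟩
    have := constant_of_has_deriv_right_zero
      (f := fun u => Φ (m u) - u) (a := δ) (b := t)
      (fun s hs => ((hψ s (hsub hs)).continuousAt).continuousWithinAt)
      (fun s hs => ((hψ s (hsub (Ico_subset_Icc_self hs))).hasDerivWithinAt))
    exact this t ⟨le_of_lt ht.1, le_rfl⟩
  have hval : t - δ + Φ m₀ = Φ (m t) := by rw [← hinit]; linarith
  rw [hval]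
  exact (hinj.leftInvOn_invFunOn (hP t htI)).symm
end

section
/- Let φ(r) = -Aνr^α + B√r with A, B, ν > 0, α > 2, R* its unique positive root, Φ(r) = ∫_r^∞ (-1/φ(ρ)) dρ, R** = (2B/(Aν))^{2/(2α-1)}, and let z₀ > R**. Set M(t) = Φ^{-1}(t + Φ(z₀)). If z : [0,T) → ℝ≥0 satisfies z(t) ≤ M(t) for 0 < t < T, then for each t ∈ (0,T): ν ∫_0^t z(s) ds ≤ ν ∫_{R**}^{z₀} Φ(y) dy + ν t R** + ν R** Φ(z₀). -/
open Set MeasureTheory intervalIntegral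

lemma aux_rpow_mvt (p K x y : ℝ) (hp : 1 ≤ p) (hy : 0 < y) (hxy : y ≤ x) (hxK : x ≤ K) :
    x ^ p - y ^ p ≤ p * K ^ (p - 1) * (x - y) := by
  rcases eq_or_lt_of_le hxy with h | h
  · rw [h]; simp
  · obtain ⟨c, hc, hderiv⟩ := exists_hasDerivAt_eq_slope (fun t => t ^ p)
      (fun t => p * t ^ (p - 1)) h
      (fun t ht => (Real.continuousAt_rpow_const t p
        (Or.inl (ne_of_gt (lt_of_lt_of_le hy ht.1)))).continuousWithinAt)
      (fun t ht => Real.hasDerivAt_rpow_const (Or.inl (ne_of_gt (hy.trans ht.1))))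
    have hc0 : 0 < c := hy.trans hc.1
    have heq : x ^ p - y ^ p = p * c ^ (p - 1) * (x - y) := by
      rw [eq_div_iff (sub_ne_zero.mpr h.ne')] at hderiv
      linarith [hderiv]
    rw [heq]
    have : c ^ (p - 1) ≤ K ^ (p - 1) :=
      Real.rpow_le_rpow hc0.le (le_trans hc.2.le hxK) (by linarith)
    have hp0 : 0 < p := by linarith
    exact mul_le_mul_of_nonneg_right (mul_le_mul_of_nonneg_left this hp0.le) (by linarith)

set_option maxHeartbeats 2000000 in
/-- If `z(t) ≤ M(t) = Φ⁻¹(t + Φ(z₀))` on `(0, T)` with `z₀ > R**`, then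
`ν ∫_0^t z(s) ds ≤ ν ∫_{R**}^{z₀} Φ(y) dy + ν t R** + ν R** Φ(z₀)`. -/
theorem key_dissipation_estimate
    (A B ν α : ℝ) (hA : 0 < A) (hB : 0 < B) (hν : 0 < ν) (hα : 2 < α)
    (φ : ℝ → ℝ) (hφ : ∀ r : ℝ, φ r = -A * ν * r ^ α + B * Real.sqrt r)
    (Rstar Rss : ℝ)
    (hRstar : Rstar = (B / (A * ν)) ^ (2 / (2 * α - 1)))
    (hRss : Rss = (2 * B / (A * ν)) ^ (2 / (2 * α - 1)))
    (Φ : ℝ → ℝ) (hΦ : ∀ r : ℝ, Φ r = ∫ ρ in Ioi r, -1 / φ ρ)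
    (z₀ T : ℝ) (hz₀ : Rss < z₀) (hT : 0 < T)
    (M : ℝ → ℝ) (hM : ∀ t : ℝ, M t = Function.invFunOn Φ (Ioi Rstar) (t + Φ z₀))
    (z : ℝ → ℝ) (hznn : ∀ t : ℝ, 0 ≤ z t)
    (hzM : ∀ t : ℝ, 0 < t → t < T → z t ≤ M t)
    (hzint : ∀ t : ℝ, 0 < t → t < T → IntervalIntegrable z volume 0 t) :
    ∀ t : ℝ, 0 < t → t < T →
      ν * ∫ s in (0:ℝ)..t, z s ≤
        ν * (∫ y in Rss..z₀, Φ y) + ν * t * Rss + ν * Rss * Φ z₀ := by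
  have hAν : 0 < A * ν := mul_pos hA hν
  set q : ℝ := 2 / (2 * α - 1) with hqdef
  set p : ℝ := α - 1/2 with hpdef
  have h2α : 0 < 2 * α - 1 := by linarith
  have hq : 0 < q := by positivity
  have hp1 : 1 ≤ p := by rw [hpdef]; linarith
  have hqp : q * p = 1 := by rw [hqdef, hpdef]; field_simp
  have hRstar_pos : 0 < Rstar := by
    rw [hRstar]; exact Real.rpow_pos_of_pos (by positivity) _
  have hRss_pos : 0 < Rss := by
    rw [hRss]; exact Real.rpow_pos_of_pos (by positivity) _
  have hRstarP : Rstar ^ p = B / (A * ν) := by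
    rw [hRstar, ← Real.rpow_mul (by positivity), hqp, Real.rpow_one]
  have hRssP : Rss ^ p = 2 * B / (A * ν) := by
    rw [hRss, ← Real.rpow_mul (by positivity), hqp, Real.rpow_one]
  have hRstarRss : Rstar < Rss := by
    rw [hRstar, hRss]
    exact Real.rpow_lt_rpow (by positivity) (by rw [div_lt_div_iff₀ hAν hAν]; nlinarith) hq
  have hRstarz₀ : Rstar < z₀ := hRstarRss.trans hz₀
  have hnegφ : ∀ ρ : ℝ, 0 < ρ → -φ ρ = A * ν * Real.sqrt ρ * (ρ ^ p - Rstar ^ p) := by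
    intro ρ hρ
    have hsq : Real.sqrt ρ = ρ ^ (1/2 : ℝ) := Real.sqrt_eq_rpow ρ
    have hρα : ρ ^ α = ρ ^ (1/2 : ℝ) * ρ ^ p := by
      rw [← Real.rpow_add hρ, hpdef]; ring_nf
    rw [hφ ρ, hRstarP, hsq, hρα]
    field_simp
    ring
  have hφneg : ∀ ρ : ℝ, Rstar < ρ → 0 < -φ ρ := by
    intro ρ hρ
    have hρ0 : 0 < ρ := hRstar_pos.trans hρ
    rw [hnegφ ρ hρ0]
    have : Rstar ^ p < ρ ^ p := Real.rpow_lt_rpow hRstar_pos.le hρ (by linarith)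
    have hsq : 0 < Real.sqrt ρ := Real.sqrt_pos.mpr hρ0
    exact mul_pos (mul_pos hAν hsq) (sub_pos.mpr this)
  have hφmeas : Measurable φ := by
    have : φ = fun r => -A * ν * r ^ α + B * Real.sqrt r := funext hφ
    rw [this]
    fun_prop
  have hmeas : Measurable (fun ρ => -1 / φ ρ) := measurable_const.div hφmeas
  have hinteg : ∀ r : ℝ, Rstar < r → IntegrableOn (fun ρ => -1 / φ ρ) (Ioi r) volume := by
    intro r hr
    have hr0 : 0 < r := hRstar_pos.trans hr
    set θ : ℝ := (Rstar / r) ^ p with hθdef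
    have hθ1 : θ < 1 :=
      Real.rpow_lt_one (by positivity) ((div_lt_one hr0).mpr hr) (by linarith)
    have hθ0 : 0 ≤ θ := Real.rpow_nonneg (by positivity) _
    have hc0 : 0 < A * ν * (1 - θ) := mul_pos hAν (by linarith)
    refine Integrable.mono' (g := fun ρ => (A * ν * (1 - θ))⁻¹ * ρ ^ (-α))
      ((integrableOn_Ioi_rpow_of_lt (by linarith) hr0).const_mul _)
      hmeas.aestronglyMeasurable ?_
    refine (ae_restrict_iff' measurableSet_Ioi).mpr (Filter.Eventually.of_forall ?_)
    intro ρ hρ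
    have hρr : r < ρ := hρ
    have hρ0 : 0 < ρ := hr0.trans hρr
    have hρRs : Rstar < ρ := hr.trans hρr
    have hkey : A * ν * (1 - θ) * ρ ^ α ≤ -φ ρ := by
      rw [hnegφ ρ hρ0]
      have h1 : Rstar ^ p = θ * r ^ p := by
        rw [hθdef, ← Real.mul_rpow (by positivity) hr0.le, div_mul_cancel₀ _ hr0.ne']
      have h2 : r ^ p ≤ ρ ^ p := Real.rpow_le_rpow hr0.le hρr.le (by linarith)
      have h3 : (1 - θ) * ρ ^ p ≤ ρ ^ p - Rstar ^ p := by
        rw [h1]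
        have := mul_le_mul_of_nonneg_left h2 hθ0
        linarith
      have hρα : ρ ^ α = ρ ^ (1/2 : ℝ) * ρ ^ p := by
        rw [← Real.rpow_add hρ0, hpdef]; ring_nf
      have hsq : Real.sqrt ρ = ρ ^ (1/2 : ℝ) := Real.sqrt_eq_rpow ρ
      rw [hρα, hsq]
      have h4 := mul_le_mul_of_nonneg_left h3
        (show (0:ℝ) ≤ A * ν * ρ ^ (1/2 : ℝ) by positivity)
      linarith [h4]
    have hφρ : 0 < -φ ρ := hφneg ρ hρRs
    have hval : -1 / φ ρ = (-φ ρ)⁻¹ := by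
      rw [neg_div, one_div, ← inv_neg]
    have hαρ : ρ ^ (-α) = (ρ ^ α)⁻¹ := Real.rpow_neg hρ0.le α
    have hnn : 0 ≤ -1 / φ ρ := by rw [hval]; positivity
    rw [Real.norm_eq_abs, abs_of_nonneg hnn, hval]
    show (-φ ρ)⁻¹ ≤ (A * ν * (1 - θ))⁻¹ * ρ ^ (-α)
    rw [hαρ, ← mul_inv]
    exact inv_anti₀ (by positivity) hkey
  have hptpos : ∀ ρ : ℝ, Rstar < ρ → 0 < -1 / φ ρ := by
    intro ρ hρ
    have := hφneg ρ hρ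
    rw [neg_div, one_div, ← inv_neg]
    positivity
  have hposIoc : ∀ a b : ℝ, Rstar < a → a < b → 0 < ∫ ρ in Ioc a b, -1 / φ ρ := by
    intro a b ha hab
    have hfi : IntegrableOn (fun ρ => -1 / φ ρ) (Ioc a b) volume :=
      (hinteg a ha).mono_set Ioc_subset_Ioi_self
    have hnn : 0 ≤ᵐ[volume.restrict (Ioc a b)] fun ρ => -1 / φ ρ :=
      (ae_restrict_iff' measurableSet_Ioc).mpr (Filter.Eventually.of_forall
        (fun ρ hρ => (hptpos ρ (ha.trans hρ.1)).le))
    rw [setIntegral_pos_iff_support_of_nonneg_ae hnn hfi]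
    refine lt_of_lt_of_le ?_ (measure_mono (fun ρ hρ => ⟨(hptpos ρ (ha.trans hρ.1)).ne', hρ⟩))
    rw [Real.volume_Ioc]
    exact ENNReal.ofReal_pos.mpr (by linarith)
  have hsplit : ∀ a b : ℝ, Rstar < a → a ≤ b →
      Φ a = (∫ ρ in Ioc a b, -1 / φ ρ) + Φ b := by
    intro a b ha hab
    have hb : Rstar < b := lt_of_lt_of_le ha hab
    rw [hΦ a, hΦ b, ← setIntegral_union (Ioc_disjoint_Ioi le_rfl) measurableSet_Ioi
      ((hinteg a ha).mono_set Ioc_subset_Ioi_self) (hinteg b hb),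
      Ioc_union_Ioi_eq_Ioi hab]
  have hΦnonneg : ∀ r : ℝ, Rstar < r → 0 ≤ Φ r := by
    intro r hr
    rw [hΦ r]
    exact setIntegral_nonneg measurableSet_Ioi (fun ρ hρ => (hptpos ρ (hr.trans hρ)).le)
  have hanti : ∀ a b : ℝ, Rstar < a → a < b → Φ b < Φ a := by
    intro a b ha hab
    have := hsplit a b ha hab.le
    have := hposIoc a b ha hab
    linarith
  have hcont : ∀ a b : ℝ, Rstar < a → a ≤ b → ContinuousOn Φ (Icc a b) := by
    intro a b ha hab
    have hint : IntegrableOn (fun ρ => -1 / φ ρ) (Icc a b) volume :=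
      (hinteg ((Rstar + a) / 2) (by linarith)).mono_set
        (fun x hx => show (Rstar + a) / 2 < x by have := hx.1; linarith)
    have hprim := intervalIntegral.continuousOn_primitive (a := a) (b := b)
      (μ := volume) hint
    have heq : ∀ x ∈ Icc a b,
        Φ b + (∫ ρ in Ioc a b, -1 / φ ρ) - (∫ ρ in Ioc a x, -1 / φ ρ) = Φ x := by
      intro x hx
      have hax : Rstar < x := lt_of_lt_of_le ha hx.1
      have h1 := hsplit x b hax hx.2
      have h2 : (∫ ρ in Ioc a b, -1 / φ ρ)
          = (∫ ρ in Ioc a x, -1 / φ ρ) + ∫ ρ in Ioc x b, -1 / φ ρ := by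
        rw [← setIntegral_union (Ioc_disjoint_Ioc_of_le le_rfl) measurableSet_Ioc
          (((hinteg a ha).mono_set Ioc_subset_Ioi_self))
          (((hinteg x hax).mono_set Ioc_subset_Ioi_self)),
          Ioc_union_Ioc_eq_Ioc hx.1 hx.2]
      linarith
    exact ContinuousOn.congr ((continuousOn_const.sub hprim)) (fun x hx => (heq x hx).symm)
  have hΦz₀pos : 0 < Φ z₀ := by
    have := hsplit z₀ (z₀ + 1) hRstarz₀ (by linarith)
    have := hposIoc z₀ (z₀ + 1) hRstarz₀ (by linarith)
    have := hΦnonneg (z₀ + 1) (by linarith)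
    linarith
  have hsurj : ∀ v : ℝ, Φ z₀ ≤ v → ∃ r : ℝ, Rstar < r ∧ r ≤ z₀ ∧ Φ r = v := by
    intro v hv
    have hz₀0 : (0:ℝ) < z₀ := hRstar_pos.trans hRstarz₀
    have hv0 : 0 < v := lt_of_lt_of_le hΦz₀pos hv
    have hp0 : (0:ℝ) < p := by rw [hpdef]; linarith
    obtain ⟨D, hDdef⟩ : ∃ x : ℝ, x = A * ν * Real.sqrt z₀ * (p * z₀ ^ (p - 1)) := ⟨_, rfl⟩
    have hD : 0 < D := by
      have h1 : 0 < Real.sqrt z₀ := Real.sqrt_pos.mpr hz₀0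
      have h2 : (0:ℝ) < z₀ ^ (p - 1) := Real.rpow_pos_of_pos hz₀0 _
      exact hDdef ▸ mul_pos (mul_pos hAν h1) (mul_pos hp0 h2)
    obtain ⟨ε, hεdef⟩ : ∃ x : ℝ, x = (z₀ - Rstar) * Real.exp (-(D * v) - 1) := ⟨_, rfl⟩
    have hε0 : 0 < ε := hεdef ▸ mul_pos (by linarith) (Real.exp_pos _)
    have hεlt : ε < z₀ - Rstar := by
      have h1 : Real.exp (-(D * v) - 1) < 1 := by
        rw [Real.exp_lt_one_iff]
        nlinarith
      rw [hεdef]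
      nlinarith
    obtain ⟨r₁, hr₁def⟩ : ∃ x : ℝ, x = Rstar + ε := ⟨_, rfl⟩
    have hr₁R : Rstar < r₁ := by rw [hr₁def]; linarith
    have hr₁z : r₁ < z₀ := by rw [hr₁def]; linarith
    have hbound : ∀ ρ ∈ Ioc r₁ z₀, (D * (ρ - Rstar))⁻¹ ≤ -1 / φ ρ := by
      intro ρ hρ
      have hρR : Rstar < ρ := hr₁R.trans hρ.1
      have hρ0 : 0 < ρ := hRstar_pos.trans hρR
      have hup : -φ ρ ≤ D * (ρ - Rstar) := by
        rw [hnegφ ρ hρ0]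
        have hmvt := aux_rpow_mvt p z₀ ρ Rstar hp1 hRstar_pos hρR.le hρ.2
        have hsq : Real.sqrt ρ ≤ Real.sqrt z₀ := Real.sqrt_le_sqrt hρ.2
        have hsq0 : 0 ≤ Real.sqrt ρ := Real.sqrt_nonneg _
        have hpd : 0 ≤ ρ ^ p - Rstar ^ p :=
          sub_nonneg.mpr (Real.rpow_le_rpow hRstar_pos.le hρR.le hp0.le)
        calc A * ν * Real.sqrt ρ * (ρ ^ p - Rstar ^ p)
            ≤ A * ν * Real.sqrt z₀ * (ρ ^ p - Rstar ^ p) := by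
              apply mul_le_mul_of_nonneg_right _ hpd
              apply mul_le_mul_of_nonneg_left hsq hAν.le
          _ ≤ A * ν * Real.sqrt z₀ * (p * z₀ ^ (p - 1) * (ρ - Rstar)) := by
              apply mul_le_mul_of_nonneg_left hmvt
              positivity
          _ = D * (ρ - Rstar) := by rw [hDdef]; ring
      have hφρ : 0 < -φ ρ := hφneg ρ hρR
      have hval : -1 / φ ρ = (-φ ρ)⁻¹ := by rw [neg_div, one_div, ← inv_neg]
      rw [hval]
      exact inv_anti₀ hφρ hup
    have hr₁ε : r₁ - Rstar = ε := by rw [hr₁def]; ring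
    have hlog : (∫ ρ in Ioc r₁ z₀, (D * (ρ - Rstar))⁻¹) = D⁻¹ * (D * v + 1) := by
      rw [← intervalIntegral.integral_of_le hr₁z.le]
      simp_rw [mul_inv]
      rw [intervalIntegral.integral_const_mul]
      rw [intervalIntegral.integral_comp_sub_right (fun x => x⁻¹) Rstar]
      rw [integral_inv (notMem_uIcc_of_lt (by linarith) (by linarith))]
      congr 1
      rw [hr₁ε, hεdef, Real.log_div (by linarith) (mul_pos (by linarith : (0:ℝ) < z₀ - Rstar) (Real.exp_pos _)).ne',
        Real.log_mul (by linarith) (Real.exp_ne_zero _), Real.log_exp]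
      ring
    have hΦr₁ : v ≤ Φ r₁ := by
      have h1 := hsplit r₁ z₀ hr₁R hr₁z.le
      have hcontLHS : ContinuousOn (fun ρ : ℝ => (D * (ρ - Rstar))⁻¹) (Icc r₁ z₀) := by
        apply ContinuousOn.inv₀
        · exact (continuous_const.mul (continuous_id.sub continuous_const)).continuousOn
        · intro x hx
          have : Rstar < x := lt_of_lt_of_le hr₁R hx.1
          exact ne_of_gt (mul_pos hD (by linarith))
      have h2 : (∫ ρ in Ioc r₁ z₀, (D * (ρ - Rstar))⁻¹) ≤ ∫ ρ in Ioc r₁ z₀, -1 / φ ρ :=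
        setIntegral_mono_on (hcontLHS.integrableOn_Icc.mono_set Ioc_subset_Icc_self)
          ((hinteg r₁ hr₁R).mono_set Ioc_subset_Ioi_self) measurableSet_Ioc hbound
      have h3 : D⁻¹ * (D * v + 1) = v + D⁻¹ := by
        rw [mul_add, mul_one, ← mul_assoc, inv_mul_cancel₀ hD.ne', one_mul]
      have h4 := hΦnonneg z₀ hRstarz₀
      have h5 : 0 < D⁻¹ := inv_pos.mpr hD
      rw [hlog, h3] at h2
      linarith
    obtain ⟨r, hrIcc, hΦr⟩ :=
      intermediate_value_Icc' hr₁z.le (hcont r₁ z₀ hr₁R hr₁z.le) ⟨hv, hΦr₁⟩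
    exact ⟨r, lt_of_lt_of_le hr₁R hrIcc.1, hrIcc.2, hΦr⟩
  have hMmem : ∀ s : ℝ, 0 ≤ s → Rstar < M s ∧ Φ (M s) = s + Φ z₀ := by
    intro s hs
    obtain ⟨r, hr1, hr2, hr3⟩ := hsurj (s + Φ z₀) (by linarith)
    have hex : ∃ a ∈ Ioi Rstar, Φ a = s + Φ z₀ := ⟨r, hr1, hr3⟩
    rw [hM s]
    exact ⟨Function.invFunOn_mem hex, Function.invFunOn_eq hex⟩
  have hMle : ∀ s : ℝ, 0 ≤ s → M s ≤ z₀ := by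
    intro s hs
    by_contra hcon
    push_neg at hcon
    have := hanti z₀ (M s) hRstarz₀ hcon
    have := (hMmem s hs).2
    linarith
  have hMlt : ∀ s y : ℝ, 0 ≤ s → Rstar < y → y < M s → s + Φ z₀ < Φ y := by
    intro s y hs hy hyM
    have := hanti y (M s) hy hyM
    have := (hMmem s hs).2
    linarith
  intro t ht0 htT
  obtain ⟨g, hgdef⟩ : ∃ g : ℝ → ℝ, g = fun s => M (max s 0) := ⟨_, rfl⟩
  have hg_eq : ∀ s : ℝ, 0 < s → g s = M s := by
    intro s hs; rw [hgdef]; simp [max_eq_left hs.le]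
  have hg_anti : Antitone g := by
    intro s₁ s₂ h12
    rw [hgdef]
    simp only
    have hu : max s₁ 0 ≤ max s₂ 0 := max_le_max h12 le_rfl
    rcases eq_or_lt_of_le hu with he | hl
    · rw [he]
    · by_contra hcon
      push_neg at hcon
      have h1 := (hMmem (max s₁ 0) (le_max_right _ _)).1
      have h2 := (hMmem (max s₁ 0) (le_max_right _ _)).2
      have h3 := (hMmem (max s₂ 0) (le_max_right _ _)).2
      have := hanti _ _ h1 hcon
      linarith
  obtain ⟨f, hfdef⟩ : ∃ f : ℝ → ℝ, f = fun s => max (g s - Rss) 0 := ⟨_, rfl⟩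
  have hf_nn : ∀ s, 0 ≤ f s := fun s => by rw [hfdef]; exact le_max_right _ _
  have hg_le : ∀ s, g s ≤ z₀ := by
    intro s; rw [hgdef]; exact hMle (max s 0) (le_max_right _ _)
  have hf_le : ∀ s, f s ≤ z₀ - Rss := by
    intro s
    rw [hfdef]
    simp only [max_le_iff]
    exact ⟨by linarith [hg_le s], by linarith⟩
  have hf_meas : Measurable f := by
    rw [hfdef]
    exact (hg_anti.measurable.sub measurable_const).max measurable_const
  have hμfin : volume (Ioc (0:ℝ) t) ≠ ⊤ := by
    rw [Real.volume_Ioc]; exact ENNReal.ofReal_ne_top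
  have hf_int : IntegrableOn f (Ioc 0 t) volume := by
    refine Integrable.mono' (g := fun _ => z₀ - Rss)
      (integrableOn_const hμfin)
      hf_meas.aestronglyMeasurable ?_
    exact Filter.Eventually.of_forall
      (fun s => by rw [Real.norm_eq_abs, abs_of_nonneg (hf_nn s)]; exact hf_le s)
  have hlayer : ∫ s in Ioc (0:ℝ) t, f s
      = ∫ l in Ioi (0:ℝ), ((volume.restrict (Ioc (0:ℝ) t)) {a : ℝ | l < f a}).toReal :=
    hf_int.integral_eq_integral_meas_lt (Filter.Eventually.of_forall fun s => hf_nn s)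
  have hGle : ∀ l : ℝ, l ∈ Ioi (0:ℝ) →
      ((volume.restrict (Ioc (0:ℝ) t)) {a : ℝ | l < f a}).toReal
        ≤ (Ioo (0:ℝ) (z₀ - Rss)).indicator (fun l => Φ (Rss + l)) l := by
    intro l hl
    have hl0 : (0:ℝ) < l := hl
    by_cases hcase : l < z₀ - Rss
    · rw [Set.indicator_of_mem (show l ∈ Ioo (0:ℝ) (z₀ - Rss) from ⟨hl0, hcase⟩)]
      have hΦRl : 0 ≤ Φ (Rss + l) := hΦnonneg _ (by linarith)
      have hsub : {a : ℝ | l < f a} ∩ Ioc 0 t ⊆ Ioo 0 (Φ (Rss + l)) := by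
        rintro a ⟨hfa, ha⟩
        have ha0 : 0 < a := ha.1
        have hfa' : l < f a := hfa
        have hga : Rss + l < g a := by
          rw [hfdef] at hfa'
          simp only [lt_max_iff] at hfa'
          rcases hfa' with h | h
          · linarith
          · linarith
        rw [hg_eq a ha0] at hga
        have hkey := hMlt a (Rss + l) ha0.le (by linarith) hga
        exact ⟨ha0, by linarith [hΦz₀pos]⟩
      rw [Measure.restrict_apply' measurableSet_Ioc]
      calc (volume ({a : ℝ | l < f a} ∩ Ioc 0 t)).toReal
          ≤ (volume (Ioo 0 (Φ (Rss + l)))).toReal := by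
            apply ENNReal.toReal_mono
            · rw [Real.volume_Ioo]; exact ENNReal.ofReal_ne_top
            · exact measure_mono hsub
        _ = Φ (Rss + l) := by
            rw [Real.volume_Ioo, ENNReal.toReal_ofReal (by linarith)]; ring_nf
    · push_neg at hcase
      rw [indicator_of_notMem (fun hmem => absurd hmem.2 (not_lt.mpr hcase))]
      have hempty : {a : ℝ | l < f a} = ∅ := by
        ext a
        simp only [mem_setOf_eq, mem_empty_iff_false, iff_false, not_lt]
        linarith [hf_le a]
      rw [hempty]
      simp
  have hΦcont2 : ContinuousOn (fun l : ℝ => Φ (Rss + l)) (Icc 0 (z₀ - Rss)) := by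
    refine (hcont Rss z₀ hRstarRss hz₀.le).comp
      ((continuous_const.add continuous_id).continuousOn) ?_
    intro x hx
    exact ⟨by linarith [hx.1], by linarith [hx.2]⟩
  have hhIntOn : IntegrableOn (fun l : ℝ => Φ (Rss + l)) (Ioo 0 (z₀ - Rss)) volume :=
    hΦcont2.integrableOn_Icc.mono_set Ioo_subset_Icc_self
  have hhint : Integrable ((Ioo (0:ℝ) (z₀ - Rss)).indicator (fun l => Φ (Rss + l)))
      (volume.restrict (Ioi (0:ℝ))) := by
    rw [integrable_indicator_iff measurableSet_Ioo]
    rw [IntegrableOn, Measure.restrict_restrict measurableSet_Ioo]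
    rw [inter_eq_left.mpr (fun x hx => hx.1)]
    exact hhIntOn
  have hmain1 : ∫ s in Ioc (0:ℝ) t, f s
      ≤ ∫ l in Ioi (0:ℝ), (Ioo (0:ℝ) (z₀ - Rss)).indicator (fun l => Φ (Rss + l)) l := by
    rw [hlayer]
    refine integral_mono_of_nonneg
      (Filter.Eventually.of_forall fun l => ENNReal.toReal_nonneg) hhint ?_
    exact (ae_restrict_iff' measurableSet_Ioi).mpr (Filter.Eventually.of_forall hGle)
  have hmain2 : (∫ l in Ioi (0:ℝ), (Ioo (0:ℝ) (z₀ - Rss)).indicator (fun l => Φ (Rss + l)) l)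
      = ∫ y in Rss..z₀, Φ y := by
    rw [setIntegral_indicator measurableSet_Ioo]
    rw [show Ioi (0:ℝ) ∩ Ioo 0 (z₀ - Rss) = Ioo 0 (z₀ - Rss)
      from inter_eq_right.mpr (fun x hx => hx.1)]
    rw [← integral_Ioc_eq_integral_Ioo,
      ← intervalIntegral.integral_of_le (by linarith : (0:ℝ) ≤ z₀ - Rss),
      intervalIntegral.integral_comp_add_left (fun y => Φ y) Rss]
    norm_num
  have hzle : ∫ s in (0:ℝ)..t, z s ≤ ∫ s in (0:ℝ)..t, (Rss + f s) := by
    have hRf_int : IntervalIntegrable (fun s => Rss + f s) volume 0 t := by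
      rw [intervalIntegrable_iff_integrableOn_Ioc_of_le ht0.le]
      exact (integrableOn_const hμfin).add hf_int
    refine intervalIntegral.integral_mono_ae_restrict ht0.le (hzint t ht0 htT) hRf_int ?_
    rw [Measure.restrict_congr_set Ioc_ae_eq_Icc.symm]
    refine (ae_restrict_iff' measurableSet_Ioc).mpr (Filter.Eventually.of_forall ?_)
    intro s hs
    have h1 : z s ≤ M s := hzM s hs.1 (lt_of_le_of_lt hs.2 htT)
    have h2 : g s - Rss ≤ f s := by rw [hfdef]; exact le_max_left _ _
    have h3 : g s = M s := hg_eq s hs.1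
    show z s ≤ Rss + f s
    linarith
  have hconst : ∫ s in (0:ℝ)..t, (Rss + f s) = Rss * t + ∫ s in Ioc (0:ℝ) t, f s := by
    rw [intervalIntegral.integral_of_le ht0.le,
      integral_add (show Integrable (fun _ => Rss) (volume.restrict (Ioc (0:ℝ) t)) from integrableOn_const hμfin) hf_int,
      setIntegral_const, Real.volume_real_Ioc_of_le ht0.le, smul_eq_mul]
    ring_nf
  have hfinal : ∫ s in (0:ℝ)..t, z s ≤ (∫ y in Rss..z₀, Φ y) + t * Rss := by
    rw [← hmain2]
    linarith [hzle, hconst, hmain1]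
  have hν1 := mul_le_mul_of_nonneg_left hfinal hν.le
  have hν2 : 0 ≤ ν * Rss * Φ z₀ := by positivity
  nlinarith [hν1, hν2]
end
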